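/- arXiv:1610.06935 — 5 statements merged into one kernel-verified Lean document; each statement's English description precedes it below -/
import Mathlib

section
/- Let d > 1 be a squarefree integer with d ≢ 1 (mod 4), and let K = ℚ(√d) with ring of integers ℤ[√d]. Then the element m = ⌈√d⌉ + √d is totally positive but is not a sum of four squares of elements of ℤ[√d]. -/
/-- For `d > 1` squarefree with `d ≢ 1 (mod 4)`, the element
`m = ⌈√d⌉ + √d` of `ℤ[√d]` is totally positive but not a sum of four squares. -/
theorem four_squares_not_represent_ceil_sqrt
    (d : ℤ) (hd : 1 < d) (hsf : Squarefree d) (hd4 : d % 4 ≠ 1)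
    (σ₁ σ₂ : ℤ√d → ℝ)
    (hσ₁ : ∀ z : ℤ√d, σ₁ z = (z.re : ℝ) + (z.im : ℝ) * Real.sqrt (d : ℝ))
    (hσ₂ : ∀ z : ℤ√d, σ₂ z = (z.re : ℝ) - (z.im : ℝ) * Real.sqrt (d : ℝ))
    (m : ℤ√d) (hm : m = ⟨⌈Real.sqrt (d : ℝ)⌉, 1⟩) :
    (0 < σ₁ m ∧ 0 < σ₂ m) ∧
      ¬ ∃ x₁ x₂ x₃ x₄ : ℤ√d, m = x₁ ^ 2 + x₂ ^ 2 + x₃ ^ 2 + x₄ ^ 2 := by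
  have hd0 : (0:ℝ) ≤ (d:ℝ) := by exact_mod_cast le_of_lt (lt_trans zero_lt_one hd)
  have hsd : (0:ℝ) < Real.sqrt (d:ℝ) := Real.sqrt_pos.mpr (by exact_mod_cast lt_trans zero_lt_one hd)
  set n : ℤ := ⌈Real.sqrt (d:ℝ)⌉ with hn
  have hle : Real.sqrt (d:ℝ) ≤ (n:ℝ) := Int.le_ceil _
  have hne : Real.sqrt (d:ℝ) ≠ (n:ℝ) := by
    intro h
    have hdn' : (d:ℝ) = ((n^2 : ℤ):ℝ) := by
      push_cast
      rw [← Real.sq_sqrt hd0, h]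
    have hdn : d = n^2 := by exact_mod_cast hdn'
    have hu : IsUnit n := hsf n (by rw [hdn]; exact ⟨1, by ring⟩)
    have := Int.isUnit_iff.mp hu
    have : d = 1 := by rcases this with h1 | h1 <;> rw [hdn, h1] <;> ring
    omega
  have hlt : Real.sqrt (d:ℝ) < (n:ℝ) := lt_of_le_of_ne hle hne
  refine ⟨⟨?_, ?_⟩, ?_⟩
  · rw [hσ₁, hm]; simp only; push_cast; linarith
  · rw [hσ₂, hm]; simp only; push_cast; linarith
  · rintro ⟨x₁, x₂, x₃, x₄, hx⟩
    have him := congrArg Zsqrtd.im hx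
    rw [hm] at him
    simp only [Zsqrtd.im_add, pow_two, Zsqrtd.im_mul] at him
    have h2 : (1:ℤ) = 2 * (x₁.re * x₁.im + x₂.re * x₂.im + x₃.re * x₃.im + x₄.re * x₄.im) := by
      linarith [him]
    have : (2:ℤ) ∣ 1 := ⟨_, h2⟩
    norm_num at this
end

section
/- Let d > 5 be a squarefree integer with d ≡ 1 (mod 4), and let K = ℚ(√d) with ring of integers ℤ[(1+√d)/2]. Then the element m = ⌊(1+√d)/2⌋ + (1+√d)/2 is totally positive but is not a sum of four squares of elements of O_K. -/
/-- The two real embeddings of `ℤ[(1+√d)/2]`, with elements encoded as pairs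
`(a, b) ↔ a + b·(1+√d)/2`; `s` is `√d` or `-√d`. -/
noncomputable def halfIntEmb (s : ℝ) (x : ℤ × ℤ) : ℝ :=
  (x.1 : ℝ) + (x.2 : ℝ) * ((1 + s) / 2)

private lemma sq_one_le' {b : ℤ} (h : b ≠ 0) : 1 ≤ b ^ 2 := by
  nlinarith [Int.one_le_abs h, sq_abs b, abs_nonneg b]

private lemma slot_bound (d a b : ℤ) (hd : 0 < d) (hb : b % 2 = 1) :
    1 + d ≤ (2 * a + b) ^ 2 + b ^ 2 * d := by
  have h1 : b ≠ 0 := by omega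
  have h2 : 2 * a + b ≠ 0 := by omega
  have e1 := sq_one_le' h1
  have e2 := sq_one_le' h2
  nlinarith

/-- For `d > 5` squarefree with `d ≡ 1 (mod 4)`, the element
`m = ⌊(1+√d)/2⌋ + (1+√d)/2` of `O_K = ℤ[(1+√d)/2]` is totally positive but is
not a sum of four squares of elements of `O_K`.  An element of `O_K` is encoded
as a pair `(a,b)` via both real embeddings simultaneously (which jointly
determine the element), so `m = Σ xᵢ²` in `O_K` is expressed as the pair of
equalities under both embeddings. -/
theorem four_squares_not_represent_half_int
    (d : ℤ) (hd : 5 < d) (hsf : Squarefree d) (hd4 : d % 4 = 1)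
    (m : ℤ × ℤ) (hm : m = (⌊(1 + Real.sqrt (d : ℝ)) / 2⌋, 1)) :
    (0 < halfIntEmb (Real.sqrt (d : ℝ)) m ∧ 0 < halfIntEmb (-Real.sqrt (d : ℝ)) m) ∧
      ¬ ∃ x : Fin 4 → ℤ × ℤ,
        halfIntEmb (Real.sqrt (d : ℝ)) m = ∑ i, (halfIntEmb (Real.sqrt (d : ℝ)) (x i)) ^ 2 ∧
        halfIntEmb (-Real.sqrt (d : ℝ)) m = ∑ i, (halfIntEmb (-Real.sqrt (d : ℝ)) (x i)) ^ 2 := by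
  subst hm
  have hd0 : (0:ℝ) ≤ (d:ℝ) := by exact_mod_cast (by omega : (0:ℤ) ≤ d)
  set s : ℝ := Real.sqrt (d:ℝ) with hsdef
  have hs2 : s ^ 2 = (d:ℝ) := Real.sq_sqrt hd0
  have hspos : 0 < s := Real.sqrt_pos.2 (by exact_mod_cast (by omega : (0:ℤ) < d))
  set n : ℤ := ⌊(1 + s) / 2⌋ with hndef
  have hn1 : (n:ℝ) ≤ (1 + s) / 2 := Int.floor_le _
  have hn2 : (1 + s) / 2 - 1 < (n:ℝ) := Int.sub_one_lt_floor _
  refine ⟨⟨?_, ?_⟩, ?_⟩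
  · simp only [halfIntEmb]
    push_cast
    linarith
  · simp only [halfIntEmb]
    push_cast
    linarith
  · rintro ⟨x, h1, h2⟩
    simp only [halfIntEmb, Fin.sum_univ_four] at h1 h2
    set a0 : ℤ := (x 0).1 with ha0
    set a1 : ℤ := (x 1).1 with ha1
    set a2 : ℤ := (x 2).1 with ha2
    set a3 : ℤ := (x 3).1 with ha3
    set b0 : ℤ := (x 0).2 with hb0
    set b1 : ℤ := (x 1).2 with hb1
    set b2 : ℤ := (x 2).2 with hb2
    set b3 : ℤ := (x 3).2 with hb3
    have hd9 : d ≠ 9 := by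
      rintro rfl
      have h3 := hsf 3 (by norm_num)
      rw [Int.isUnit_iff] at h3
      omega
    have hd13 : (13:ℤ) ≤ d := by omega
    have hd13' : (13:ℝ) ≤ (d:ℝ) := by exact_mod_cast hd13
    have hsleft : s < ((d:ℝ) - 3) / 2 := by
      nlinarith [hs2, hspos, mul_nonneg (by linarith : (0:ℝ) ≤ (d:ℝ) - 13) (by linarith : (0:ℝ) ≤ (d:ℝ))]
    have hnlt : 4 * n ≤ d - 2 := by
      have h4 : ((4 * n : ℤ) : ℝ) < ((d - 1 : ℤ) : ℝ) := by push_cast; linarith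
      have h5 : (4 * n : ℤ) < d - 1 := by exact_mod_cast h4
      omega
    have hA : ((4 * n + 2 : ℤ) : ℝ) =
        (((2*a0+b0)^2 + b0^2*d + ((2*a1+b1)^2 + b1^2*d) + ((2*a2+b2)^2 + b2^2*d)
          + ((2*a3+b3)^2 + b3^2*d) : ℤ) : ℝ) := by
      push_cast
      linear_combination 2 * h1 + 2 * h2 + ((b0:ℝ)^2+(b1:ℝ)^2+(b2:ℝ)^2+(b3:ℝ)^2) * hs2
    have hAint : (4 * n + 2 : ℤ) =
        (2*a0+b0)^2 + b0^2*d + ((2*a1+b1)^2 + b1^2*d) + ((2*a2+b2)^2 + b2^2*d)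
          + ((2*a3+b3)^2 + b3^2*d) := by exact_mod_cast hA
    have hB' : s * ((1:ℤ):ℝ) =
        s * ((b0*(2*a0+b0) + b1*(2*a1+b1) + b2*(2*a2+b2) + b3*(2*a3+b3) : ℤ) : ℝ) := by
      push_cast
      linear_combination h1 - h2
    have hBint : (1:ℤ) = b0*(2*a0+b0) + b1*(2*a1+b1) + b2*(2*a2+b2) + b3*(2*a3+b3) := by
      exact_mod_cast mul_left_cancel₀ (ne_of_gt hspos) hB'
    have hdpos : (0:ℤ) < d := by omega
    have hodd : b0 % 2 = 1 ∨ b1 % 2 = 1 ∨ b2 % 2 = 1 ∨ b3 % 2 = 1 := by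
      by_contra hcon
      push_neg at hcon
      obtain ⟨hc0, hc1, hc2, hc3⟩ := hcon
      obtain ⟨k0, e0⟩ : ∃ k, b0 = 2*k := ⟨b0/2, by omega⟩
      obtain ⟨k1, e1⟩ : ∃ k, b1 = 2*k := ⟨b1/2, by omega⟩
      obtain ⟨k2, e2⟩ : ∃ k, b2 = 2*k := ⟨b2/2, by omega⟩
      obtain ⟨k3, e3⟩ : ∃ k, b3 = 2*k := ⟨b3/2, by omega⟩
      rw [e0, e1, e2, e3] at hBint
      obtain ⟨y, hy⟩ : ∃ y : ℤ, 2 * y = 1 :=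
        ⟨k0*(2*a0+2*k0) + k1*(2*a1+2*k1) + k2*(2*a2+2*k2) + k3*(2*a3+2*k3), by
          linear_combination -hBint⟩
      omega
    have nn0 : (0:ℤ) ≤ (2*a0+b0)^2 := sq_nonneg _
    have nn1 : (0:ℤ) ≤ (2*a1+b1)^2 := sq_nonneg _
    have nn2 : (0:ℤ) ≤ (2*a2+b2)^2 := sq_nonneg _
    have nn3 : (0:ℤ) ≤ (2*a3+b3)^2 := sq_nonneg _
    have md0 : (0:ℤ) ≤ b0^2*d := mul_nonneg (sq_nonneg _) hdpos.le
    have md1 : (0:ℤ) ≤ b1^2*d := mul_nonneg (sq_nonneg _) hdpos.le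
    have md2 : (0:ℤ) ≤ b2^2*d := mul_nonneg (sq_nonneg _) hdpos.le
    have md3 : (0:ℤ) ≤ b3^2*d := mul_nonneg (sq_nonneg _) hdpos.le
    rcases hodd with h | h | h | h
    · have := slot_bound d a0 b0 hdpos h; linarith
    · have := slot_bound d a1 b1 hdpos h; linarith
    · have := slot_bound d a2 b2 hdpos h; linarith
    · have := slot_bound d a3 b3 hdpos h; linarith
end

section
/- Let D ≡ 1 (mod 4) be a squarefree positive integer with D > 5, and let χ_D be the real primitive quadratic character modulo D. Then Σ_{a=1}^{(D-1)/2} χ_D(a)·a·(a - D) ≡ 0 (mod D). -/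
open Finset

private lemma U_invariance (D p : ℕ) [NeZero D] (pp : p.Prime) (hpD : p ∣ D)
    (b : ℕ) (hb : b.Coprime D)
    (hne : (jacobiSym b D : ZMod p) * (b : ZMod p) ^ 2 ≠ 1) :
    ∑ x : ZMod D, (jacobiSym x.val D : ZMod p) * (x.val : ZMod p) ^ 2 = 0 := by
  haveI : Fact p.Prime := ⟨pp⟩
  set U := ∑ x : ZMod D, (jacobiSym x.val D : ZMod p) * (x.val : ZMod p) ^ 2 with hU
  have hbu : IsUnit (b : ZMod D) := (ZMod.isUnit_iff_coprime b D).mpr hb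
  obtain ⟨u, hu⟩ := hbu
  have hDp : (D : ZMod p) = 0 := (ZMod.natCast_eq_zero_iff D p).mpr hpD
  have key : (jacobiSym b D : ZMod p) * (b : ZMod p) ^ 2 * U = U := by
    rw [hU, Finset.mul_sum]
    refine Fintype.sum_bijective (fun x : ZMod D => (u : ZMod D) * x) u.mulLeft_bijective _ _
      (fun x => ?_)
    have hval : ((u : ZMod D) * x).val = (b * x.val) % D := by
      rw [hu]
      have : (b : ZMod D) * x = ((b * x.val : ℕ) : ZMod D) := by
        push_cast
        rw [ZMod.natCast_val, ZMod.cast_id]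
      rw [this, ZMod.val_natCast]
    have hjac : (jacobiSym (((u : ZMod D) * x).val) D : ℤ)
        = jacobiSym b D * jacobiSym x.val D := by
      rw [hval, ← jacobiSym.mul_left]
      apply jacobiSym.mod_left'
      push_cast
      rw [Int.emod_emod_of_dvd _ dvd_rfl]
    have hcast : ((((u : ZMod D) * x).val : ℕ) : ZMod p) = (b : ZMod p) * (x.val : ZMod p) := by
      rw [hval]
      have h2 : ((b * x.val % D : ℕ) : ZMod p) = ((b * x.val : ℕ) : ZMod p) := by
        conv_rhs => rw [← Nat.div_add_mod (b * x.val) D]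
        push_cast
        rw [hDp]
        ring
      rw [h2]
      push_cast
      ring
    show _ = (jacobiSym (((u : ZMod D) * x).val) D : ZMod p)
        * ((((u : ZMod D) * x).val : ℕ) : ZMod p) ^ 2
    rw [hjac, hcast]
    push_cast
    ring
  have h0 : ((jacobiSym b D : ZMod p) * (b : ZMod p) ^ 2 - 1) * U = 0 := by
    rw [sub_mul, key, one_mul, sub_self]
  rcases mul_eq_zero.mp h0 with h | h
  · exact absurd (sub_eq_zero.mp h) hne
  · exact h

private lemma exists_jacobi_neg (m : ℕ) (hm : 1 < m) (hodd : Odd m) (hsf : Squarefree m) :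
    ∃ c : ℕ, jacobiSym c m = -1 := by
  obtain ⟨q, hq, hqm⟩ := Nat.exists_prime_and_dvd (fun h => by omega : m ≠ 1)
  haveI : Fact q.Prime := ⟨hq⟩
  have hm0 : m ≠ 0 := by omega
  obtain ⟨m', rfl⟩ := hqm
  have hq0 : q ≠ 0 := hq.ne_zero
  have hm'0 : m' ≠ 0 := by rintro rfl; simp at hm0
  haveI : NeZero q := ⟨hq0⟩
  haveI : NeZero m' := ⟨hm'0⟩
  have hq2 : q ≠ 2 := by
    rintro rfl
    rw [Nat.odd_iff] at hodd
    omega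
  have hco : q.Coprime m' := (Nat.Prime.coprime_iff_not_dvd hq).mpr fun hd => by
    have : IsUnit q := hsf q (mul_dvd_mul_left q hd)
    exact hq.one_lt.ne' (Nat.isUnit_iff.mp this)
  obtain ⟨x, hx⟩ := FiniteField.exists_nonsquare (F := ZMod q)
    (by rwa [ZMod.ringChar_zmod_n])
  have hleg : legendreSym q x.val = -1 := by
    rw [legendreSym.eq_neg_one_iff']
    rwa [ZMod.natCast_val, ZMod.cast_id]
  obtain ⟨c, hc1, hc2⟩ := Nat.chineseRemainder hco x.val 1
  refine ⟨c, ?_⟩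
  rw [jacobiSym.mul_right]
  have e1 : jacobiSym c q = -1 := by
    rw [jacobiSym.mod_left' (show (c : ℤ) % q = (x.val : ℤ) % q by
      have := hc1; unfold Nat.ModEq at this; omega)]
    rw [← jacobiSym.legendreSym.to_jacobiSym]
    exact hleg
  have e2 : jacobiSym c m' = 1 := by
    rw [jacobiSym.mod_left' (show (c : ℤ) % m' = ((1:ℕ) : ℤ) % m' by
      have := hc2; unfold Nat.ModEq at this; omega)]
    exact_mod_cast jacobiSym.one_left m'
  rw [e1, e2]; ring

private lemma exists_b (D p : ℕ) (hsf : Squarefree D) (hD4 : D % 4 = 1) (hD : 5 < D)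
    (pp : p.Prime) (hpD : p ∣ D) :
    ∃ b : ℕ, b.Coprime D ∧ (jacobiSym b D : ZMod p) * (b : ZMod p) ^ 2 ≠ 1 := by
  haveI : Fact p.Prime := ⟨pp⟩
  have hDodd : D % 2 = 1 := by omega
  have hp2 : p ≠ 2 := by
    rintro rfl
    obtain ⟨k, rfl⟩ := hpD
    omega
  have hp3 : 2 < p := by have := pp.two_le; omega
  by_cases hDp : D = p
  · -- prime case
    subst hDp
    by_contra hcon
    push_neg at hcon
    obtain ⟨g, hg⟩ := IsCyclic.exists_generator (α := (ZMod D)ˣ)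
    set b := ((g : ZMod D)).val with hb
    have hbco : b.Coprime D := ZMod.val_coe_unit_coprime g
    have h1 := hcon b hbco
    have hbg : (b : ZMod D) = (g : ZMod D) := by rw [hb, ZMod.natCast_val, ZMod.cast_id]
    have hgcd : Int.gcd (b : ℤ) D = 1 := by
      rw [Int.gcd_natCast_natCast]; exact hbco
    have hsq : (jacobiSym b D) ^ 2 = 1 := jacobiSym.sq_one hgcd
    have h4 : (g : ZMod D) ^ 4 = 1 := by
      have h2 := congrArg (· ^ 2) h1
      simp only [mul_pow, one_pow] at h2
      rw [hbg] at h2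
      have hχ : ((jacobiSym b D : ℤ) : ZMod D) ^ 2 = 1 := by
        rw [← Int.cast_pow, hsq, Int.cast_one]
      rw [hχ, one_mul, ← pow_mul] at h2
      exact h2
    have hu4 : g ^ 4 = 1 := by
      apply Units.ext
      push_cast
      exact h4
    have hdvd : orderOf g ∣ 4 := orderOf_dvd_of_pow_eq_one hu4
    have hcard : orderOf g = Nat.card (ZMod D)ˣ :=
      orderOf_eq_card_of_forall_mem_zpowers hg
    rw [Nat.card_eq_fintype_card, ZMod.card_units_eq_totient, Nat.totient_prime pp] at hcard
    rw [hcard] at hdvd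
    have := Nat.le_of_dvd (by norm_num) hdvd
    omega
  · -- composite case
    obtain ⟨m, hDm⟩ := hpD
    have hmD : m ∣ D := ⟨p, by rw [hDm]; ring⟩
    have hm0 : m ≠ 0 := by rintro rfl; simp at hDm; omega
    have hm1 : m ≠ 1 := by rintro rfl; simp at hDm; exact hDp hDm
    haveI : NeZero m := ⟨hm0⟩
    haveI : NeZero p := ⟨pp.ne_zero⟩
    have hmodd : Odd m := by
      rcases Nat.even_or_odd m with he | ho
      · exfalso
        have h2 : 2 ∣ D := dvd_trans he.two_dvd hmD
        obtain ⟨k, rfl⟩ := h2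
        omega
      · exact ho
    have hmsf : Squarefree m := hsf.squarefree_of_dvd hmD
    have hcopm : p.Coprime m := (Nat.Prime.coprime_iff_not_dvd pp).mpr fun hd => by
      have : IsUnit p := hsf p (by rw [hDm]; exact mul_dvd_mul_left p hd)
      exact pp.one_lt.ne' (Nat.isUnit_iff.mp this)
    obtain ⟨c, hc⟩ := exists_jacobi_neg m (by omega) hmodd hmsf
    have hccop : c.Coprime m := by
      by_contra hnc
      have : jacobiSym c m = 0 := jacobiSym.eq_zero_iff_not_coprime.mpr (by
        rwa [Int.gcd_natCast_natCast])
      omega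
    obtain ⟨b, hb1, hb2⟩ := Nat.chineseRemainder hcopm 1 c
    have hbp : b.Coprime p := Nat.coprime_comm.mp <|
      (Nat.Prime.coprime_iff_not_dvd pp).mpr fun hd => by
        obtain ⟨k, rfl⟩ := hd
        have := hb1; unfold Nat.ModEq at this
        simp [Nat.mul_mod_right] at this
        omega
    have hbmeq : (b : ZMod m) = (c : ZMod m) := (ZMod.natCast_eq_natCast_iff _ _ _).mpr hb2
    have hbm : b.Coprime m := (ZMod.isUnit_iff_coprime b m).mp
      (hbmeq ▸ (ZMod.isUnit_iff_coprime c m).mpr hccop)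
    have hbD : b.Coprime D := by
      rw [hDm]
      exact Nat.Coprime.mul_right hbp hbm
    have hJ : jacobiSym b D = -1 := by
      rw [hDm, jacobiSym.mul_right]
      have e1 : jacobiSym b p = 1 := by
        rw [jacobiSym.mod_left' (show (b : ℤ) % p = ((1:ℕ) : ℤ) % p by
          have := hb1; unfold Nat.ModEq at this; omega)]
        exact_mod_cast jacobiSym.one_left p
      have e2 : jacobiSym b m = -1 := by
        rw [jacobiSym.mod_left' (show (b : ℤ) % m = ((c:ℕ) : ℤ) % m by
          have := hb2; unfold Nat.ModEq at this; omega)]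
        exact hc
      rw [e1, e2]; ring
    have hb1' : (b : ZMod p) = 1 := by
      have : (b : ZMod p) = ((1:ℕ) : ZMod p) := (ZMod.natCast_eq_natCast_iff _ _ _).mpr hb1
      simpa using this
    refine ⟨b, hbD, ?_⟩
    rw [hJ, hb1']
    haveI : Fact (2 < p) := ⟨hp3⟩
    simpa using ZMod.neg_one_ne_one

private lemma prime_dvd_T (D : ℕ) (hsf : Squarefree D) (hD4 : D % 4 = 1) (hD : 5 < D)
    (p : ℕ) (pp : p.Prime) (hpD : p ∣ D) :
    (p : ℤ) ∣ ∑ a ∈ Finset.Icc (1 : ℤ) ((D : ℤ) - 1), jacobiSym a D * a ^ 2 := by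
  haveI : NeZero D := ⟨by omega⟩
  obtain ⟨b, hb, hne⟩ := exists_b D p hsf hD4 hD pp hpD
  rw [← ZMod.intCast_zmod_eq_zero_iff_dvd]
  push_cast
  have hzero : ∑ a ∈ Finset.Icc (1 : ℤ) ((D : ℤ) - 1),
      ((jacobiSym a D : ZMod p) * (a : ZMod p) ^ 2)
      = ∑ a ∈ Finset.Icc (0 : ℤ) ((D : ℤ) - 1),
      ((jacobiSym a D : ZMod p) * (a : ZMod p) ^ 2) := by
    have hins : Finset.Icc (0 : ℤ) ((D : ℤ) - 1)
        = insert 0 (Finset.Icc (1 : ℤ) ((D : ℤ) - 1)) := by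
      ext x; simp [Finset.mem_Icc, Finset.mem_insert]; omega
    rw [hins, Finset.sum_insert (by simp)]
    simp
  rw [hzero]
  have hreidx : ∑ a ∈ Finset.Icc (0 : ℤ) ((D : ℤ) - 1),
      ((jacobiSym a D : ZMod p) * (a : ZMod p) ^ 2)
      = ∑ x : ZMod D, (jacobiSym x.val D : ZMod p) * (x.val : ZMod p) ^ 2 := by
    refine Finset.sum_nbij' (fun a => ((a : ℤ) : ZMod D)) (fun x => (x.val : ℤ))
      (fun a _ => Finset.mem_univ _) (fun x _ => ?_) (fun a ha => ?_) (fun x _ => ?_)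
      (fun a ha => ?_)
    · simp only [Finset.mem_Icc]
      have := ZMod.val_lt x
      omega
    · show (((a : ZMod D)).val : ℤ) = a
      rw [ZMod.val_intCast]
      simp only [Finset.mem_Icc] at ha
      exact Int.emod_eq_of_lt ha.1 (by omega)
    · push_cast
      rw [ZMod.natCast_val, ZMod.cast_id]
    · simp only [Finset.mem_Icc] at ha
      have hv : (((a : ZMod D)).val : ℤ) = a % (D : ℤ) := ZMod.val_intCast a
      have hv' : (((a : ZMod D)).val : ℤ) = a := by
        rw [hv]; exact Int.emod_eq_of_lt ha.1 (by omega)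
      have hj : jacobiSym a D = jacobiSym ((a : ZMod D)).val D := by
        apply jacobiSym.mod_left'
        rw [hv']
      have hc : ((((a : ZMod D)).val : ℕ) : ZMod p) = ((a : ℤ) : ZMod p) := by
        have : ((((a : ZMod D)).val : ℕ) : ZMod p) = ((((a : ZMod D)).val : ℤ) : ZMod p) := by
          push_cast; ring
        rw [this, hv']
      rw [hj, hc]
  rw [hreidx]
  exact U_invariance D p pp hpD b hb hne

private lemma reflect_sum (D : ℕ) (hD4 : D % 4 = 1) (hD : 5 < D) :
    ∑ a ∈ Finset.Icc (1 : ℤ) ((D : ℤ) - 1), jacobiSym a D * a * (a - D)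
      = 2 * ∑ a ∈ Finset.Icc (1 : ℤ) (((D : ℤ) - 1) / 2), jacobiSym a D * a * (a - D) := by
  set h : ℤ := ((D : ℤ) - 1) / 2 with hh
  have hDodd : D % 2 = 1 := by omega
  have h2 : 2 * h = (D : ℤ) - 1 := by omega
  have hsplit : Finset.Icc (1 : ℤ) ((D : ℤ) - 1)
      = Finset.Icc 1 h ∪ Finset.Icc (h + 1) ((D : ℤ) - 1) := by
    ext x; simp [Finset.mem_Icc, Finset.mem_union]; omega
  have hdisj : Disjoint (Finset.Icc (1 : ℤ) h) (Finset.Icc (h + 1) ((D : ℤ) - 1)) := by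
    rw [Finset.disjoint_left]
    intro x hx hx'
    simp [Finset.mem_Icc] at hx hx'
    omega
  rw [hsplit, Finset.sum_union hdisj]
  have hrefl : ∑ a ∈ Finset.Icc (h + 1) ((D : ℤ) - 1), jacobiSym a D * a * (a - D)
      = ∑ a ∈ Finset.Icc (1 : ℤ) h, jacobiSym a D * a * (a - D) := by
    refine Finset.sum_nbij' (fun a => (D : ℤ) - a) (fun a => (D : ℤ) - a)
      (fun a ha => ?_) (fun a ha => ?_) (fun a _ => by ring) (fun a _ => by ring)
      (fun a ha => ?_)
    · simp only [Finset.mem_Icc] at ha ⊢; omega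
    · simp only [Finset.mem_Icc] at ha ⊢; omega
    · have hJ : jacobiSym ((D : ℤ) - a) D = jacobiSym a D := by
        rw [jacobiSym.mod_left' (show ((D : ℤ) - a) % D = (-a) % D by
          rw [show (D : ℤ) - a = -a + (D : ℤ) * 1 by ring, Int.add_mul_emod_self_left])]
        rw [jacobiSym.neg a (Nat.odd_iff.mpr hDodd), ZMod.χ₄_nat_one_mod_four hD4, one_mul]
      rw [hJ]
      ring
  rw [hrefl]
  ring

/-- for squarefree `D ≡ 1 (mod 4)`, `D > 5`, with `χ_D = (·/D)`
the quadratic character of conductor `D` (given by the Jacobi symbol since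
`D ≡ 1 (mod 4)`), the sum `Σ_{a=1}^{(D-1)/2} χ_D(a)·a·(a-D)` is divisible by `D`. -/
theorem character_sum_div_D (D : ℕ) (hsf : Squarefree D) (hD4 : D % 4 = 1) (hD : 5 < D) :
    (D : ℤ) ∣ ∑ a ∈ Finset.Icc (1 : ℤ) ((D - 1) / 2), jacobiSym a D * a * (a - D) := by
  set S := ∑ a ∈ Finset.Icc (1 : ℤ) (((D : ℤ) - 1) / 2), jacobiSym a D * a * (a - D) with hS
  set T2 := ∑ a ∈ Finset.Icc (1 : ℤ) ((D : ℤ) - 1), jacobiSym a D * a * (a - D) with hT2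
  set T' := ∑ a ∈ Finset.Icc (1 : ℤ) ((D : ℤ) - 1), jacobiSym a D * a ^ 2 with hT'
  have hDodd : D % 2 = 1 := by omega
  -- D divides T'
  have hdvdT' : (D : ℤ) ∣ T' := by
    have habs : ∀ p ∈ D.primeFactors, p ∣ T'.natAbs := by
      intro p hp
      obtain ⟨pp, hpD, -⟩ := Nat.mem_primeFactors.mp hp
      have := prime_dvd_T D hsf hD4 hD p pp hpD
      rw [← hT'] at this
      exact Int.ofNat_dvd_right.mp (Int.dvd_natAbs.mpr this)
    have hprod : ∏ p ∈ D.primeFactors, p = D := Nat.prod_primeFactors_of_squarefree hsf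
    have : D ∣ T'.natAbs := by
      rw [← hprod]
      exact Finset.prod_primes_dvd _ (fun p hp => (Nat.mem_primeFactors.mp hp).1.prime) habs
    exact dvd_trans (Int.ofNat_dvd.mpr this) (Int.natAbs_dvd.mpr dvd_rfl)
  -- D divides T' - T2
  have hdiff : T' - T2 = (∑ a ∈ Finset.Icc (1 : ℤ) ((D : ℤ) - 1), jacobiSym a D * a) * D := by
    rw [hT', hT2, ← Finset.sum_sub_distrib, Finset.sum_mul]
    apply Finset.sum_congr rfl
    intro a _
    ring
  have hdvdT2 : (D : ℤ) ∣ T2 := by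
    have h1 : (D : ℤ) ∣ T' - T2 := ⟨_, by rw [hdiff]; ring⟩
    have := dvd_sub hdvdT' h1
    simpa using this
  -- T2 = 2 * S
  have hT2S : T2 = 2 * S := reflect_sum D hD4 hD
  rw [hT2S] at hdvdT2
  -- D coprime to 2
  have hcop : IsCoprime (D : ℤ) 2 := by
    rw [Int.isCoprime_iff_gcd_eq_one]
    have : Nat.gcd D 2 = 1 :=
      Nat.coprime_comm.mp ((Nat.Prime.coprime_iff_not_dvd Nat.prime_two).mpr (by omega))
    simpa [Int.gcd] using this
  exact hcop.dvd_of_dvd_mul_left hdvdT2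
end

section
/- Let Q(x) = x₁² + x₂² + x₃² + x₄² over ℤ/2^ν for ν ≥ 5, and fix m odd. Every solution of Q(x) ≡ m (mod 2⁵) with at least one odd coordinate lifts to exactly 2^{3(ν-5)} solutions of Q(x) ≡ m (mod 2^ν) (i.e., the number of solutions mod 2^ν of Q(x) ≡ m having some coordinate odd equals 2^{3(ν-5)} times the number of such solutions mod 2⁵). -/
/-!
Reduction mod `2^k` is two-to-one on `ℤ/2^(k+1)`, and it preserves both the value of `Q` mod `2^k`
and being of good type (oddness of a coordinate). Hence the good solutions mod `2^(k+1)` of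
`Q = m` and of `Q = m + 2^k` together form the full preimage of the good solutions mod `2^k` of
`Q = m`, of size `2^4` times theirs. For `k ≥ 3` the unit `u = 1 + 2^(k-1)` has `u^2 = 1 + 2^k`,
so for odd `m` the scaling `x ↦ u x` maps the solutions of `Q = m` bijectively onto those of
`Q = m + 2^k`. Each lifting step therefore multiplies the count by `2^4 / 2 = 2^3`.
-/

open Finset

namespace GoodTypeLifting

lemma isUnit_castHom_pow_iff {p a b : ℕ} [NeZero p] (hb : b ≠ 0) (hab : b ≤ a)
    (x : ZMod (p ^ a)) :
    IsUnit (ZMod.castHom (pow_dvd_pow p hab) (ZMod (p ^ b)) x) ↔ IsUnit x := by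
  rw [← ZMod.natCast_zmod_val x, map_natCast, ZMod.isUnit_iff_coprime, ZMod.isUnit_iff_coprime,
    Nat.coprime_pow_right_iff (Nat.pos_of_ne_zero hb),
    Nat.coprime_pow_right_iff (Nat.pos_of_ne_zero (by omega))]

section Reduction

variable (k : ℕ)

def reduce : ZMod (2 ^ (k + 1)) →+* ZMod (2 ^ k) :=
  ZMod.castHom (pow_dvd_pow 2 k.le_succ) _

lemma reduce_surjective : Function.Surjective (reduce k) :=
  ZMod.castHom_surjective _

lemma two_pow_succ_eq_zero : (2 : ZMod (2 ^ (k + 1))) ^ (k + 1) = 0 := by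
  exact_mod_cast ZMod.natCast_self (2 ^ (k + 1))

lemma two_pow_ne_zero : (2 : ZMod (2 ^ (k + 1))) ^ k ≠ 0 := by
  have h : ((2 ^ k : ℕ) : ZMod (2 ^ (k + 1))) ≠ 0 := by
    rw [Ne, ZMod.natCast_eq_zero_iff, Nat.pow_dvd_pow_iff_le_right one_lt_two]
    omega
  exact_mod_cast h

lemma reduce_eq_zero_iff (d : ZMod (2 ^ (k + 1))) : reduce k d = 0 ↔ d = 0 ∨ d = 2 ^ k := by
  constructor
  · obtain ⟨a, rfl⟩ := ZMod.intCast_surjective d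
    rw [map_intCast, ZMod.intCast_zmod_eq_zero_iff_dvd]
    rintro ⟨t, rfl⟩
    rcases Int.even_or_odd' t with ⟨s, rfl | rfl⟩
    · left
      push_cast
      linear_combination s * two_pow_succ_eq_zero k
    · right
      push_cast
      linear_combination s * two_pow_succ_eq_zero k
  · rintro (rfl | rfl)
    · exact map_zero _
    · rw [map_pow, map_ofNat]
      exact_mod_cast ZMod.natCast_self (2 ^ k)

lemma reduce_eq_reduce_iff (x y : ZMod (2 ^ (k + 1))) :
    reduce k y = reduce k x ↔ y = x ∨ y = x + 2 ^ k := by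
  rw [← sub_eq_zero, ← map_sub, reduce_eq_zero_iff, sub_eq_zero, sub_eq_iff_eq_add']

lemma card_filter_reduce_eq (y : ZMod (2 ^ k)) : #{x | reduce k x = y} = 2 := by
  obtain ⟨a, rfl⟩ := reduce_surjective k y
  have hfiber : ({x | reduce k x = reduce k a} : Finset _) = {a, a + 2 ^ k} := by
    ext x
    simp only [mem_filter, mem_univ, true_and, mem_insert, mem_singleton, reduce_eq_reduce_iff]
  rw [hfiber, card_pair]
  simpa using two_pow_ne_zero k

lemma isUnit_reduce_iff (hk : k ≠ 0) (x : ZMod (2 ^ (k + 1))) :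
    IsUnit (reduce k x) ↔ IsUnit x :=
  isUnit_castHom_pow_iff hk k.le_succ x

lemma one_add_two_pow_pred_sq (hk : 3 ≤ k) :
    (1 + 2 ^ (k - 1) : ZMod (2 ^ (k + 1))) ^ 2 = 1 + 2 ^ k := by
  obtain ⟨i, rfl⟩ : ∃ i, k = i + 3 := ⟨k - 3, by omega⟩
  rw [show i + 3 - 1 = i + 2 by omega]
  linear_combination 2 ^ i * two_pow_succ_eq_zero (i + 3)

lemma one_add_two_pow_mul_intCast_of_odd {m : ℤ} (hm : Odd m) :
    (1 + 2 ^ k : ZMod (2 ^ (k + 1))) * m = m + 2 ^ k := by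
  obtain ⟨t, rfl⟩ := hm
  push_cast
  linear_combination t * two_pow_succ_eq_zero k

lemma isUnit_one_add_two_pow_pred (hk : 3 ≤ k) :
    IsUnit (1 + 2 ^ (k - 1) : ZMod (2 ^ (k + 1))) := by
  refine IsUnit.of_pow_eq_one (n := 4) ?_ (by norm_num)
  rw [show 4 = 2 * 2 from rfl, pow_mul, one_add_two_pow_pred_sq k hk]
  obtain ⟨i, rfl⟩ : ∃ i, k = i + 1 := ⟨k - 1, by omega⟩
  linear_combination (1 + 2 ^ i) * two_pow_succ_eq_zero (i + 1)

end Reduction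

section GoodSolutions

variable {ι : Type*} [Fintype ι] [DecidableEq ι]

variable (ι) in
open Classical in
noncomputable def goodSolutions (n : ℕ) [NeZero n] (c : ZMod n) : Finset (ι → ZMod n) :=
  {x | ∑ i, x i ^ 2 = c ∧ ∃ i, IsUnit (x i)}

@[simp]
lemma mem_goodSolutions {n : ℕ} [NeZero n] {c : ZMod n} {x : ι → ZMod n} :
    x ∈ goodSolutions ι n c ↔ ∑ i, x i ^ 2 = c ∧ ∃ i, IsUnit (x i) := by
  simp [goodSolutions]

lemma unit_smul_mem_goodSolutions {n : ℕ} [NeZero n] (u : (ZMod n)ˣ) {c : ZMod n}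
    {x : ι → ZMod n} (hx : x ∈ goodSolutions ι n c) :
    u • x ∈ goodSolutions ι n (u ^ 2 * c) := by
  obtain ⟨hsum, i, hi⟩ := mem_goodSolutions.1 hx
  refine mem_goodSolutions.2 ⟨?_, i, ?_⟩
  · simp only [Pi.smul_apply, Units.smul_def, smul_eq_mul, mul_pow, ← mul_sum, hsum]
  · exact u.isUnit.mul hi

lemma card_goodSolutions_unit_sq_mul {n : ℕ} [NeZero n] (u : (ZMod n)ˣ) (c : ZMod n) :
    #(goodSolutions ι n (u ^ 2 * c)) = #(goodSolutions ι n c) := by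
  refine card_nbij' (u⁻¹ • ·) (u • ·) (fun x hx => ?_)
    (fun x hx => unit_smul_mem_goodSolutions u hx)
    (fun x _ => smul_inv_smul u x) (fun x _ => inv_smul_smul u x)
  simpa [← mul_assoc, ← mul_pow] using unit_smul_mem_goodSolutions u⁻¹ hx

lemma card_filter_reduce_comp_mem (k : ℕ) (S : Finset (ι → ZMod (2 ^ k))) :
    #{x : ι → ZMod (2 ^ (k + 1)) | reduce k ∘ x ∈ S} = 2 ^ Fintype.card ι * #S := by
  rw [card_eq_sum_card_fiberwise (f := (reduce k ∘ ·)) (t := S) fun x hx => by simpa using hx,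
    mul_comm]
  refine sum_const_nat fun b _ => ?_
  have hfiber : ({x ∈ {x | reduce k ∘ x ∈ S} | reduce k ∘ x = b} : Finset (ι → _)) =
      Fintype.piFinset fun i => {a | reduce k a = b i} := by
    ext x
    simp only [mem_filter, mem_univ, true_and, Fintype.mem_piFinset, funext_iff,
      Function.comp_apply]
    exact ⟨And.right, fun h => ⟨by rwa [show reduce k ∘ x = b from funext h], h⟩⟩
  simp [hfiber, Fintype.card_piFinset, card_filter_reduce_eq]

lemma filter_reduce_comp_mem_goodSolutions {k : ℕ} (hk : k ≠ 0) (c : ZMod (2 ^ (k + 1))) :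
    ({x | reduce k ∘ x ∈ goodSolutions ι (2 ^ k) (reduce k c)} :
      Finset (ι → ZMod (2 ^ (k + 1)))) =
      goodSolutions ι _ c ∪ goodSolutions ι _ (c + 2 ^ k) := by
  ext x
  simp only [mem_filter, mem_univ, true_and, mem_union, mem_goodSolutions, Function.comp_apply,
    isUnit_reduce_iff k hk, ← map_pow, ← map_sum, reduce_eq_reduce_iff, or_and_right]

lemma disjoint_goodSolutions {n : ℕ} [NeZero n] {c d : ZMod n} (hcd : c ≠ d) :
    Disjoint (goodSolutions ι n c) (goodSolutions ι n d) :=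
  disjoint_left.2 fun _ hc hd =>
    hcd <| (mem_goodSolutions.1 hc).1.symm.trans (mem_goodSolutions.1 hd).1

lemma card_goodSolutions_succ [Nonempty ι] {k : ℕ} (hk : 3 ≤ k) {m : ℤ} (hm : Odd m) :
    #(goodSolutions ι (2 ^ (k + 1)) m) =
      2 ^ (Fintype.card ι - 1) * #(goodSolutions ι (2 ^ k) m) := by
  obtain ⟨u, hu⟩ := isUnit_one_add_two_pow_pred k hk
  have hscale : (u : ZMod (2 ^ (k + 1))) ^ 2 * m = m + 2 ^ k := by
    rw [hu, one_add_two_pow_pred_sq k hk, one_add_two_pow_mul_intCast_of_odd k hm]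
  have hne : (m : ZMod (2 ^ (k + 1))) ≠ m + 2 ^ k := by simpa using two_pow_ne_zero k
  have hcard := card_filter_reduce_comp_mem (ι := ι) k (goodSolutions ι (2 ^ k) m)
  rw [← map_intCast (reduce k), filter_reduce_comp_mem_goodSolutions (by omega),
    card_union_of_disjoint (disjoint_goodSolutions hne), ← hscale,
    card_goodSolutions_unit_sq_mul, map_intCast] at hcard
  have htwo : 2 ^ Fintype.card ι = 2 * 2 ^ (Fintype.card ι - 1) := by
    rw [← pow_succ', Nat.sub_add_cancel Fintype.card_pos]
  rw [htwo] at hcard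
  linarith

lemma card_goodSolutions_pow [Nonempty ι] {k j : ℕ} (hk : 3 ≤ k) (hkj : k ≤ j) {m : ℤ}
    (hm : Odd m) : #(goodSolutions ι (2 ^ j) m) =
      2 ^ ((Fintype.card ι - 1) * (j - k)) * #(goodSolutions ι (2 ^ k) m) := by
  induction j, hkj using Nat.le_induction with
  | base => simp
  | succ j hkj ih =>
    rw [card_goodSolutions_succ (hk.trans hkj) hm, ih, ← mul_assoc, ← pow_add, Nat.succ_sub hkj,
      Nat.mul_succ, add_comm]

end GoodSolutions

end GoodTypeLifting

/-- for `Q = x₁²+x₂²+x₃²+x₄²` over `ℤ/2^ν`, `ν ≥ 5`, and `m` odd,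
the number of Good-type solutions (some coordinate a unit, i.e. odd) of
`Q(x) ≡ m (mod 2^ν)` equals `2^{3(ν-5)}` times the number of Good-type
solutions mod `2⁵`. -/
theorem good_type_lifting_two (ν : ℕ) (hν : 5 ≤ ν) (m : ℤ) (hm : Odd m) :
    Nat.card {x : Fin 4 → ZMod (2 ^ ν) //
        (∑ i, x i ^ 2) = (m : ZMod (2 ^ ν)) ∧ ∃ i, IsUnit (x i)} =
      2 ^ (3 * (ν - 5)) *
        Nat.card {x : Fin 4 → ZMod (2 ^ 5) //
          (∑ i, x i ^ 2) = (m : ZMod (2 ^ 5)) ∧ ∃ i, IsUnit (x i)} := by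
  simp only [← GoodTypeLifting.mem_goodSolutions, Nat.card_eq_finsetCard]
  exact GoodTypeLifting.card_goodSolutions_pow (by norm_num) hν hm
end

section
/- Let p be an odd prime, m an integer, and for ν ≥ 1 let R_{p^ν}^{Zero}(m) = {x ∈ (ℤ/p^ν)⁴ : x₁²+x₂²+x₃²+x₄² ≡ m (mod p^ν), all xᵢ ≡ 0 (mod p)}. If p² | m and ν ≥ 3, then the map x ↦ x/p (mod p^{ν-2}) is a surjection from R_{p^ν}^{Zero}(m) onto R_{p^{ν-2}}(m/p²) in which every fiber has exactly p⁴ elements. -/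
/-!
Write a Zero-type solution as `x = p • a` with `a ∈ [0, p^(ν-1))⁴`. Since `p^ν = p² p^(ν-2)`,
`Σ (p aᵢ)² ≡ p² m' (mod p^ν)` is equivalent to `Σ aᵢ² ≡ m' (mod p^(ν-2))`, a condition that only
depends on `a mod p^(ν-2)`. Hence the fibre over a solution `y` is the product of the four sets
`{aᵢ < p^(ν-1) | aᵢ ≡ yᵢ (mod p^(ν-2))}`, each of which has `p` elements.
-/

theorem ZMod.dvd_val_of_natCast_dvd {M p : ℕ} [NeZero M] (hpM : p ∣ M) {x : ZMod M}
    (hx : (p : ZMod M) ∣ x) : p ∣ x.val := by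
  have h := map_dvd (ZMod.castHom hpM (ZMod p)) hx
  rwa [map_natCast, ZMod.natCast_self, zero_dvd_iff, ZMod.castHom_apply, ZMod.cast_eq_val,
    ZMod.natCast_eq_zero_iff] at h

theorem ZMod.sum_sq_eq_iff_sum_sq_val_div_eq {ι : Type*} [Fintype ι] {M N p : ℕ} [NeZero M]
    (hM : M = p ^ 2 * N) {x : ι → ZMod M} (hx : ∀ i, (p : ZMod M) ∣ x i) (m : ℤ) :
    ∑ i, x i ^ 2 = (((p : ℤ) ^ 2 * m : ℤ) : ZMod M) ↔
      ∑ i, (((x i).val / p : ℕ) : ZMod N) ^ 2 = (m : ZMod N) := by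
  subst hM
  have hp : (p : ℤ) ^ 2 ≠ 0 := by exact_mod_cast left_ne_zero_of_mul (NeZero.ne (p ^ 2 * N))
  set a : ι → ℕ := fun i ↦ (x i).val / p
  have hval (i : ι) : (x i).val = p * a i := by
    refine (Nat.mul_div_cancel' (dvd_val_of_natCast_dvd ?_ (hx i))).symm
    exact dvd_mul_of_dvd_left (dvd_pow_self p two_ne_zero) N
  have hsum : ∑ i, x i ^ 2 = (((p : ℤ) ^ 2 * ∑ i, (a i : ℤ) ^ 2 : ℤ) : ZMod (p ^ 2 * N)) := by
    conv_lhs => enter [2, i]; rw [← ZMod.natCast_zmod_val (x i), hval i]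
    push_cast [Finset.mul_sum]
    exact Finset.sum_congr rfl fun i _ ↦ by ring
  rw [hsum, ZMod.intCast_eq_intCast_iff_dvd_sub, ← mul_sub, Nat.cast_mul, Nat.cast_pow,
    mul_dvd_mul_iff_left hp, ← ZMod.intCast_eq_intCast_iff_dvd_sub]
  push_cast
  rfl

open scoped Count in
theorem Nat.card_lt_and_modEq {L N : ℕ} (hN : 0 < N) (hNL : N ∣ L) (v : ℕ) :
    Nat.card {k : ℕ // k < L ∧ k ≡ v [MOD N]} = L / N := by
  rw [Nat.card_eq_fintype_card, ← Nat.count_eq_card_fintype, Nat.count_modEq_card _ hN,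
    Nat.mod_eq_zero_of_dvd hNL]
  simp

def ZMod.natCastDvdEquiv {M L p : ℕ} [NeZero M] (hM : M = p * L) (P : ℕ → Prop) :
    {z : ZMod M // (p : ZMod M) ∣ z ∧ P (z.val / p)} ≃ {k : ℕ // k < L ∧ P k} :=
  have hp : 0 < p := Nat.pos_of_ne_zero (left_ne_zero_of_mul (hM ▸ NeZero.ne M))
  have hval (k : {k : ℕ // k < L ∧ P k}) : ((p * k.1 : ℕ) : ZMod M).val / p = k.1 := by
    rw [ZMod.val_cast_of_lt (hM ▸ Nat.mul_lt_mul_of_pos_left k.2.1 hp),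
      Nat.mul_div_cancel_left _ hp]
  { toFun z := ⟨z.1.val / p, Nat.div_lt_of_lt_mul (hM ▸ z.1.val_lt), z.2.2⟩
    invFun k := ⟨(p * k.1 : ℕ), ⟨k.1, by push_cast; rfl⟩, by rw [hval k]; exact k.2.2⟩
    left_inv z := Subtype.ext <| by
      simp only
      rw [Nat.mul_div_cancel' (ZMod.dvd_val_of_natCast_dvd (hM ▸ dvd_mul_right p L) z.2.1),
        ZMod.natCast_zmod_val]
    right_inv k := Subtype.ext (hval k) }

theorem ZMod.card_natCast_dvd_and_val_div_eq {M L N p : ℕ} [NeZero M] [NeZero N]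
    (hM : M = p * L) (hNL : N ∣ L) (y : ZMod N) :
    Nat.card {z : ZMod M // (p : ZMod M) ∣ z ∧ ((z.val / p : ℕ) : ZMod N) = y} = L / N := by
  conv_lhs => enter [1, 1, z, 2]; rw [← ZMod.natCast_zmod_val y, ZMod.natCast_eq_natCast_iff]
  rw [Nat.card_congr (ZMod.natCastDvdEquiv hM (· ≡ y.val [MOD N])),
    Nat.card_lt_and_modEq (NeZero.pos N) hNL]

theorem zero_type_surjection_general (p ν : ℕ) (hp : p.Prime)
    (hν : 3 ≤ ν) (m : ℤ) (hm : (p : ℤ) ^ 2 ∣ m) :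
    (∀ x : Fin 4 → ZMod (p ^ ν),
      ((∑ i, x i ^ 2) = (m : ZMod (p ^ ν)) ∧ ∀ i, ((p : ZMod (p ^ ν)) ∣ x i)) →
        (∑ i, (((x i).val / p : ℕ) : ZMod (p ^ (ν - 2))) ^ 2) =
          ((m / (p : ℤ) ^ 2 : ℤ) : ZMod (p ^ (ν - 2)))) ∧
    ∀ y : Fin 4 → ZMod (p ^ (ν - 2)),
      (∑ i, y i ^ 2) = ((m / (p : ℤ) ^ 2 : ℤ) : ZMod (p ^ (ν - 2))) →
        Nat.card {x : Fin 4 → ZMod (p ^ ν) //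
          ((∑ i, x i ^ 2) = (m : ZMod (p ^ ν)) ∧ ∀ i, ((p : ZMod (p ^ ν)) ∣ x i)) ∧
            ∀ i, (((x i).val / p : ℕ) : ZMod (p ^ (ν - 2))) = y i} = p ^ 4 := by
  have : NeZero p := ⟨hp.ne_zero⟩
  obtain ⟨m, rfl⟩ := hm
  rw [Int.mul_ediv_cancel_left _ (pow_ne_zero 2 (Nat.cast_ne_zero.2 hp.ne_zero))]
  have hM : p ^ ν = p ^ 2 * p ^ (ν - 2) := by rw [← pow_add]; congr 1; omega
  have hM' : p ^ ν = p * (p * p ^ (ν - 2)) := by rw [hM]; ring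
  refine ⟨fun x ⟨hsum, hx⟩ ↦ (ZMod.sum_sq_eq_iff_sum_sq_val_div_eq hM hx m).1 hsum, fun y hy ↦ ?_⟩
  -- over a fixed `y` the quadratic condition is automatic, so the fibre is a product
  have hfiber (x : Fin 4 → ZMod (p ^ ν)) :
      (∑ i, x i ^ 2 = (((p : ℤ) ^ 2 * m : ℤ) : ZMod (p ^ ν)) ∧ ∀ i, (p : ZMod (p ^ ν)) ∣ x i) ∧
        (∀ i, (((x i).val / p : ℕ) : ZMod (p ^ (ν - 2))) = y i) ↔
      ∀ i, (p : ZMod (p ^ ν)) ∣ x i ∧ (((x i).val / p : ℕ) : ZMod (p ^ (ν - 2))) = y i := by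
    refine ⟨fun ⟨⟨_, hx⟩, hxy⟩ i ↦ ⟨hx i, hxy i⟩,
      fun h ↦ ⟨⟨?_, fun i ↦ (h i).1⟩, fun i ↦ (h i).2⟩⟩
    rw [ZMod.sum_sq_eq_iff_sum_sq_val_div_eq hM fun i ↦ (h i).1]
    simpa only [fun i ↦ (h i).2] using hy
  rw [Nat.card_congr ((Equiv.subtypeEquivRight hfiber).trans (Equiv.subtypePiEquivPi
    (p := fun i z ↦ (p : ZMod (p ^ ν)) ∣ z ∧ ((z.val / p : ℕ) : ZMod (p ^ (ν - 2))) = y i))),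
    Nat.card_pi]
  simp only [ZMod.card_natCast_dvd_and_val_div_eq hM' (dvd_mul_left _ p),
    Nat.mul_div_cancel _ (NeZero.pos _), Finset.prod_const, Finset.card_univ, Fintype.card_fin]

/-- for `p` an odd prime, `ν ≥ 3`, `p² ∣ m`, the map `x ↦ x/p`
(realized via canonical representatives) sends Zero-type solutions of
`Σxᵢ² ≡ m (mod p^ν)` to solutions of `Σxᵢ² ≡ m/p² (mod p^{ν-2})`, and over each
solution `y` mod `p^{ν-2}` there lie exactly `p⁴` Zero-type solutions. -/
theorem zero_type_surjection (p ν : ℕ) (hp : p.Prime) (hodd : p ≠ 2)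
    (hν : 3 ≤ ν) (m : ℤ) (hm : (p : ℤ) ^ 2 ∣ m) :
    (∀ x : Fin 4 → ZMod (p ^ ν),
      ((∑ i, x i ^ 2) = (m : ZMod (p ^ ν)) ∧ ∀ i, ((p : ZMod (p ^ ν)) ∣ x i)) →
        (∑ i, (((x i).val / p : ℕ) : ZMod (p ^ (ν - 2))) ^ 2) =
          ((m / (p : ℤ) ^ 2 : ℤ) : ZMod (p ^ (ν - 2)))) ∧
    ∀ y : Fin 4 → ZMod (p ^ (ν - 2)),
      (∑ i, y i ^ 2) = ((m / (p : ℤ) ^ 2 : ℤ) : ZMod (p ^ (ν - 2))) →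
        Nat.card {x : Fin 4 → ZMod (p ^ ν) //
          ((∑ i, x i ^ 2) = (m : ZMod (p ^ ν)) ∧ ∀ i, ((p : ZMod (p ^ ν)) ∣ x i)) ∧
            ∀ i, (((x i).val / p : ℕ) : ZMod (p ^ (ν - 2))) = y i} = p ^ 4 :=
  zero_type_surjection_general p ν hp hν m hm
end
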